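/- arXiv:2310.01834 — 3 statements merged into one kernel-verified Lean document; each statement's English description precedes it below -/
import Mathlib

section
/- A monotone function ψ : Spec R → ℤ is a t-function (that is, for every minimal inclusion of primes 𝔭 ⊊ 𝔮, one has ψ(𝔭) ≤ ψ(𝔮) ≤ ψ(𝔭) + 1) remains monotone after mutation at a specialization-closed set W, but need not remain a t-function; concretely, for R = ℤ, ψ the constant function 0, and W = {(2)} together with U-data where (2) ∈ U, an explicit mutation produces a function taking value 2 at a maximal prime over a minimal prime of value 0, violating the t-function condition. -/
open scoped Classical in
/-- The (right) mutation of a function ψ : Spec R → ℤ at a subset W ⊆ Spec R. -/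
noncomputable def mutate {R : Type*} [CommRing R] (W : Set (PrimeSpectrum R))
    (ψ : PrimeSpectrum R → ℤ) : PrimeSpectrum R → ℤ :=
  fun p => if p ∈ W then ψ p + 1 else ψ p

/-- ψ is a t-function: for every minimal (covering) inclusion of primes 𝔭 ⊊ 𝔮 one has
ψ(𝔭) ≤ ψ(𝔮) ≤ ψ(𝔭) + 1. -/
def IsTFun {R : Type*} [CommRing R] (ψ : PrimeSpectrum R → ℤ) : Prop :=
  ∀ p q : PrimeSpectrum R, p ⋖ q → ψ p ≤ ψ q ∧ ψ q ≤ ψ p + 1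

/-!
Adding 1 on an upper set to a monotone function keeps it monotone. For the counterexample,
mutate the constant function 0 on Spec ℤ at the closed points: the result ψ takes values in
{0, 1}, so it is a t-function. Mutating ψ once more at the closed points gives 0 at the generic
point (0) and 2 at (2), although (0) ⋖ (2).
-/

section Mutation

variable {R : Type*} [CommRing R] {W : Set (PrimeSpectrum R)} {ψ : PrimeSpectrum R → ℤ}
  {p : PrimeSpectrum R}

theorem mutate_of_mem (hp : p ∈ W) : mutate W ψ p = ψ p + 1 := if_pos hp

theorem mutate_of_not_mem (hp : p ∉ W) : mutate W ψ p = ψ p := if_neg hp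

theorem le_mutate : ψ p ≤ mutate W ψ p := by
  unfold mutate; split_ifs <;> omega

theorem mutate_le : mutate W ψ p ≤ ψ p + 1 := by
  unfold mutate; split_ifs <;> omega

theorem Monotone.mutate (hψ : Monotone ψ) (hW : IsUpperSet W) : Monotone (mutate W ψ) := by
  intro a b hab
  by_cases ha : a ∈ W
  · rw [mutate_of_mem ha, mutate_of_mem (hW hab ha)]
    exact add_le_add_left (hψ hab) 1
  · rw [mutate_of_not_mem ha]
    exact (hψ hab).trans le_mutate

theorem isTFun_mutate_const (hW : IsUpperSet W) (c : ℤ) : IsTFun (mutate W fun _ => c) :=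
  fun _ _ hab => ⟨monotone_const.mutate hW hab.le, mutate_le.trans (add_le_add_left le_mutate 1)⟩

theorem not_isTFun_of_covBy {q : PrimeSpectrum R} (hpq : p ⋖ q) (h : ψ p + 1 < ψ q) :
    ¬ IsTFun ψ :=
  fun hψ => (hψ p q hpq).2.not_gt h

end Mutation

namespace PrimeSpectrum

variable {R : Type*} [CommRing R] [IsDomain R] [Ring.KrullDimLE 1 R] {x : PrimeSpectrum R}

theorem isMax_of_ne_bot (hx : x ≠ ⊥) : IsMax x :=
  isMax_iff.2 (x.isPrime.isMaximal_of_ne_bot fun h => hx (PrimeSpectrum.ext h))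

theorem bot_covBy_of_ne_bot (hx : x ≠ ⊥) : ⊥ ⋖ x :=
  ⟨bot_lt_iff_ne_bot.2 hx, fun _ hc hcx => (isMax_of_ne_bot hc.ne').not_lt hcx⟩

end PrimeSpectrum

/-- mutation at a specialization-closed set preserves monotonicity, but need
not preserve the t-function property: for R = ℤ there is a t-function ψ and a
specialization-closed W whose mutation takes value 2 at a maximal prime covering a
minimal prime of value 0, hence is not a t-function. -/
theorem mutation_preserves_monotone_not_tfun :
    (∀ (R : Type*) [CommRing R] (ψ : PrimeSpectrum R → ℤ) (W : Set (PrimeSpectrum R)),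
      Monotone ψ → IsUpperSet W → Monotone (mutate W ψ)) ∧
    ∃ (ψ : PrimeSpectrum ℤ → ℤ) (W : Set (PrimeSpectrum ℤ)) (p q : PrimeSpectrum ℤ),
      Monotone ψ ∧ IsTFun ψ ∧ IsUpperSet W ∧
      IsMin p ∧ IsMax q ∧ p ⋖ q ∧ ψ p = 0 ∧
      mutate W ψ p = 0 ∧ mutate W ψ q = 2 ∧ ¬ IsTFun (mutate W ψ) := by
  refine ⟨fun R _ ψ W hψ hW => hψ.mutate hW, ?_⟩
  let W : Set (PrimeSpectrum ℤ) := Set.Ioi ⊥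
  let ψ : PrimeSpectrum ℤ → ℤ := mutate W fun _ => 0
  let two : PrimeSpectrum ℤ :=
    ⟨Ideal.span {2}, (Ideal.span_singleton_prime two_ne_zero).2 Int.prime_two⟩
  have hW : IsUpperSet W := isUpperSet_Ioi ⊥
  have hbot : (⊥ : PrimeSpectrum ℤ) ∉ W := lt_irrefl (⊥ : PrimeSpectrum ℤ)
  have htwo : two ≠ ⊥ := fun h =>
    two_ne_zero (Ideal.span_singleton_eq_bot.1 (congrArg PrimeSpectrum.asIdeal h))
  have htwoW : two ∈ W := bot_lt_iff_ne_bot.2 htwo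
  have hψbot : ψ ⊥ = 0 := mutate_of_not_mem hbot
  have hmut_bot : mutate W ψ ⊥ = 0 := (mutate_of_not_mem hbot).trans hψbot
  have hψtwo : ψ two = 1 := mutate_of_mem htwoW
  have hmut_two : mutate W ψ two = 2 := by rw [mutate_of_mem htwoW, hψtwo]; rfl
  have hcov : ⊥ ⋖ two := PrimeSpectrum.bot_covBy_of_ne_bot htwo
  refine ⟨ψ, W, ⊥, two, monotone_const.mutate hW, isTFun_mutate_const hW 0, hW, isMin_bot,
    PrimeSpectrum.isMax_of_ne_bot htwo, hcov, hψbot, hmut_bot, hmut_two,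
    not_isTFun_of_covBy hcov (by omega)⟩
end

section
/- Every bounded monotone function ψ : Spec R → ℤ is an iterated mutation of a constant function: if the image of ψ lies in (a, b], then ψ = μ⁻_{W_{b-1}} ∘ ⋯ ∘ μ⁻_{W_{a+1}} applied to the constant function a+1, where W_k = ψ⁻¹((k, ∞)), and each W_k is specialization-closed. -/
/-- Iterated mutation: starting from the constant function a + 1, the (i+1)-st step
mutates at W_{a+1+i} = ψ⁻¹((a+1+i, ∞)). -/
noncomputable def iterMutate {R : Type*} [CommRing R] (ψ : PrimeSpectrum R → ℤ) (a : ℤ) :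
    ℕ → (PrimeSpectrum R → ℤ)
  | 0 => fun _ => a + 1
  | (i + 1) => mutate {p | (a + 1 + (i : ℤ)) < ψ p} (iterMutate ψ a i)

/-!
Mutating the truncation `min ψ c` at `ψ⁻¹((c, ∞))` raises it exactly where `ψ > c`, giving
`min ψ (c + 1)`. So the `n`-th iterated mutation of the constant `a + 1` is `min ψ (a + 1 + n)`,
which for `n = b - 1 - a` is `ψ` itself since `ψ ≤ b`.
-/

section

variable {R : Type*} [CommRing R] {ψ : PrimeSpectrum R → ℤ}

lemma mutate_setOf_lt_apply_of_eq_min {φ : PrimeSpectrum R → ℤ} {c : ℤ} {p : PrimeSpectrum R}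
    (h : φ p = min (ψ p) c) : mutate {q | c < ψ q} φ p = min (ψ p) (c + 1) := by
  simp only [mutate, Set.mem_ofPred_eq, h]
  split_ifs <;> omega

lemma iterMutate_apply_eq_min {a : ℤ} (n : ℕ) {p : PrimeSpectrum R} (hap : a < ψ p) :
    iterMutate ψ a n p = min (ψ p) (a + 1 + n) := by
  induction n with
  | zero => simp only [iterMutate]; omega
  | succ i ih =>
    rw [iterMutate, mutate_setOf_lt_apply_of_eq_min ih]
    push_cast
    ring_nf

end

/-- every bounded monotone ψ : Spec R → ℤ with image in (a, b] is the
iterated mutation μ⁻_{W_{b-1}} ∘ ⋯ ∘ μ⁻_{W_{a+1}} of the constant function a + 1, where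
W_k = ψ⁻¹((k, ∞)); each W_k is specialization-closed. -/
theorem monotone_is_iterated_mutation_of_constant {R : Type*} [CommRing R]
    (ψ : PrimeSpectrum R → ℤ) (hmono : Monotone ψ)
    (a b : ℤ) (hψ : ∀ p, a < ψ p ∧ ψ p ≤ b) :
    (∀ k : ℤ, IsUpperSet {p : PrimeSpectrum R | k < ψ p}) ∧
    iterMutate ψ a (b - 1 - a).toNat = ψ := by
  refine ⟨fun k => (isUpperSet_Ioi k).preimage hmono, funext fun p => ?_⟩
  obtain ⟨hap, hpb⟩ := hψ p
  rw [iterMutate_apply_eq_min _ hap]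
  omega
end

section
/- Let (𝒰, 𝒱) be a t-structure in a triangulated category 𝒟 and (𝒯, ℱ) a torsion pair in the heart ℋ = 𝒰[-1] ∩ 𝒱. Then the pair (𝒰 ∗ 𝒯, ℱ ∗ 𝒱[-1]) is again a t-structure in 𝒟, whose heart equals ℱ ∗ 𝒯[-1]. -/
open CategoryTheory Pretriangulated

variable {C : Type*} [Category C] [Limits.HasZeroObject C] [Preadditive C]
  [HasShift C ℤ] [∀ n : ℤ, (shiftFunctor C n).Additive] [Pretriangulated C]

/-- The extension class 𝒳 ∗ 𝒴: objects A fitting in a distinguished triangle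
X → A → Y → X[1] with X ∈ 𝒳 and Y ∈ 𝒴. -/
def star (X Y : Set C) : Set C :=
  {A | ∃ x ∈ X, ∃ y ∈ Y, ∃ (f : x ⟶ A) (g : A ⟶ y) (h : y ⟶ x⟦(1 : ℤ)⟧),
    Triangle.mk f g h ∈ distTriang C}

/-- A class of objects closed under isomorphism (a strict full subcategory). -/
def IsoClosed (S : Set C) : Prop := ∀ ⦃X Y : C⦄, (X ≅ Y) → X ∈ S → Y ∈ S

/-- The heart 𝒰[-1] ∩ 𝒱 of a pair (𝒰, 𝒱), as a class of objects. -/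
def heartSet (U V : Set C) : Set C := {X | X⟦(1 : ℤ)⟧ ∈ U ∧ X ∈ V}

/-- (𝒰, 𝒱) is a t-structure: both classes are iso-closed, Hom(𝒰, 𝒱) = 0,
𝒰[1] ⊆ 𝒰, 𝒱[-1] ⊆ 𝒱, and every object is an extension 𝒟 = 𝒰 ∗ 𝒱. -/
def IsTStr (U V : Set C) : Prop :=
  IsoClosed U ∧ IsoClosed V ∧
  (∀ X ∈ U, ∀ Y ∈ V, ∀ f : X ⟶ Y, f = 0) ∧
  (∀ X ∈ U, X⟦(1 : ℤ)⟧ ∈ U) ∧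
  (∀ Y ∈ V, Y⟦(-1 : ℤ)⟧ ∈ V) ∧
  (∀ A : C, A ∈ star U V)


set_option linter.unusedSectionVars false
set_option maxHeartbeats 1000000

open Limits ZeroObject Preadditive

private lemma HRS_star_isoClosed (S R : Set C) : IsoClosed (star S R) := by
  rintro A B e ⟨x, hx, y, hy, f, g, h, hTr⟩
  refine ⟨x, hx, y, hy, f ≫ e.hom, e.inv ≫ g, h, isomorphic_distinguished _ hTr _ ?_⟩
  exact Triangle.isoMk _ _ (Iso.refl _) e.symm (Iso.refl _) (by simp [Triangle.mk]) (by simp [Triangle.mk]) (by simp [Triangle.mk])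

private lemma HRS_rot3 {X Y Z : C} (f : X ⟶ Y) (g : Y ⟶ Z) (h : Z ⟶ X⟦(1 : ℤ)⟧)
    (H : Triangle.mk f g h ∈ distTriang C) :
    Triangle.mk (-f⟦(1 : ℤ)⟧') (-g⟦(1 : ℤ)⟧') (-h⟦(1 : ℤ)⟧') ∈ distTriang C :=
  rot_of_distTriang _ (rot_of_distTriang _ (rot_of_distTriang _ H))

private lemma HRS_unshift_isZero (X : C) (hX : IsZero (X⟦(1 : ℤ)⟧)) : IsZero X := by
  rw [IsZero.iff_id_eq_zero]
  exact ((shiftFunctor C (1 : ℤ)).map_eq_zero_iff).mp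
    (by rw [CategoryTheory.Functor.map_id]; exact hX.eq_of_src _ _)

private def HRS_shiftdown (X : C) : (X⟦(1 : ℤ)⟧)⟦(-1 : ℤ)⟧ ≅ X :=
  (shiftFunctorCompIsoId C (1 : ℤ) (-1 : ℤ) (by ring)).app X

private def HRS_shiftup (X : C) : (X⟦(-1 : ℤ)⟧)⟦(1 : ℤ)⟧ ≅ X :=
  (shiftFunctorCompIsoId C (-1 : ℤ) (1 : ℤ) (by ring)).app X

section Aux

variable {U V T F : Set C}

private lemma HRS_hom_shift (hHom : ∀ X ∈ U, ∀ Y ∈ V, ∀ f : X ⟶ Y, f = 0)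
    {X Y : C} (hX : X⟦(1 : ℤ)⟧ ∈ U) (hY : Y⟦(1 : ℤ)⟧ ∈ V) (f : X ⟶ Y) : f = 0 :=
  ((shiftFunctor C (1 : ℤ)).map_eq_zero_iff).mp (hHom _ hX _ hY _)

private lemma HRS_mem_V_of (hViso : IsoClosed V)
    (hHom : ∀ X ∈ U, ∀ Y ∈ V, ∀ f : X ⟶ Y, f = 0)
    (hV1 : ∀ Y ∈ V, Y⟦(-1 : ℤ)⟧ ∈ V) (hdecomp : ∀ A : C, A ∈ star U V)
    (X : C) (hX : ∀ u₀ ∈ U, ∀ f : u₀ ⟶ X, f = 0) : X ∈ V := by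
  obtain ⟨u, hu, v, hv, f, g, h, hTr⟩ := hdecomp X
  have hf : f = 0 := hX u hu f
  obtain ⟨s, hs⟩ := Triangle.coyoneda_exact₂ _ (inv_rot_of_distTriang _ hTr) (𝟙 u)
    (by dsimp [Triangle.invRotate, Triangle.mk]; rw [hf, comp_zero]; rfl)
  have hs0 : s = 0 := hHom u hu _ (hV1 v hv) s
  have hzu : IsZero u := by
    rw [IsZero.iff_id_eq_zero, hs, hs0, zero_comp]; rfl
  have : IsIso (Triangle.mk f g h).mor₂ := (Triangle.isZero₁_iff_isIso₂ _ hTr).1 hzu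
  have hg : IsIso g := this
  exact hViso (asIso g).symm hv

private lemma HRS_mem_U_of (hUiso : IsoClosed U)
    (hHom : ∀ X ∈ U, ∀ Y ∈ V, ∀ f : X ⟶ Y, f = 0)
    (hU1 : ∀ X ∈ U, X⟦(1 : ℤ)⟧ ∈ U) (hdecomp : ∀ A : C, A ∈ star U V)
    (X : C) (hX : ∀ v₀ ∈ V, ∀ f : X ⟶ v₀, f = 0) : X ∈ U := by
  obtain ⟨u, hu, v, hv, f, g, h, hTr⟩ := hdecomp X
  have hg : g = 0 := hX v hv g
  obtain ⟨ρ, hρ⟩ := Triangle.yoneda_exact₂ _ (rot_of_distTriang _ hTr) (𝟙 v)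
    (by dsimp [Triangle.rotate, Triangle.mk]; rw [hg, zero_comp]; rfl)
  have hρ0 : ρ = 0 := hHom _ (hU1 u hu) _ hv ρ
  have hzv : IsZero v := by
    rw [IsZero.iff_id_eq_zero, hρ, hρ0, comp_zero]; rfl
  have : IsIso (Triangle.mk f g h).mor₁ := (Triangle.isZero₃_iff_isIso₁ _ hTr).1 hzv
  have hf : IsIso f := this
  exact hUiso (asIso f) hu

private lemma HRS_V_ext (hHom : ∀ X ∈ U, ∀ Y ∈ V, ∀ f : X ⟶ Y, f = 0)
    (hViso : IsoClosed V) (hV1 : ∀ Y ∈ V, Y⟦(-1 : ℤ)⟧ ∈ V)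
    (hdecomp : ∀ A : C, A ∈ star U V)
    (T' : Triangle C) (hT' : T' ∈ distTriang C) (h1 : T'.obj₁ ∈ V) (h3 : T'.obj₃ ∈ V) :
    T'.obj₂ ∈ V := by
  refine HRS_mem_V_of hViso hHom hV1 hdecomp _ (fun u₀ hu₀ φ => ?_)
  obtain ⟨σ, hσ⟩ := Triangle.coyoneda_exact₂ _ hT' φ (hHom u₀ hu₀ _ h3 _)
  rw [hσ, hHom u₀ hu₀ _ h1 σ, zero_comp]

private lemma HRS_U_ext (hHom : ∀ X ∈ U, ∀ Y ∈ V, ∀ f : X ⟶ Y, f = 0)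
    (hUiso : IsoClosed U) (hU1 : ∀ X ∈ U, X⟦(1 : ℤ)⟧ ∈ U)
    (hdecomp : ∀ A : C, A ∈ star U V)
    (T' : Triangle C) (hT' : T' ∈ distTriang C) (h1 : T'.obj₁ ∈ U) (h3 : T'.obj₃ ∈ U) :
    T'.obj₂ ∈ U := by
  refine HRS_mem_U_of hUiso hHom hU1 hdecomp _ (fun v₀ hv₀ φ => ?_)
  obtain ⟨σ, hσ⟩ := Triangle.yoneda_exact₂ _ hT' φ (hHom _ h1 _ hv₀ _)
  rw [hσ, hHom _ h3 _ hv₀ σ, comp_zero]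

end Aux


section Aux2

variable {U V T F : Set C}

private lemma HRS_zero_mem (hUiso : IsoClosed U) (hViso : IsoClosed V)
    (hHom : ∀ X ∈ U, ∀ Y ∈ V, ∀ f : X ⟶ Y, f = 0)
    (hU1 : ∀ X ∈ U, X⟦(1 : ℤ)⟧ ∈ U) (hdecomp : ∀ A : C, A ∈ star U V) :
    (0 : C) ∈ U ∧ (0 : C) ∈ V := by
  obtain ⟨u, hu, v, hv, f, g, h, hTr⟩ := hdecomp (0 : C)
  have h3 : IsIso (Triangle.mk f g h).mor₃ :=
    (Triangle.isZero₂_iff_isIso₃ _ hTr).1 (isZero_zero C)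
  have hh : IsIso h := h3
  have hinv : inv h = 0 := hHom _ (hU1 u hu) _ hv (inv h)
  have hzv : IsZero v := by
    rw [IsZero.iff_id_eq_zero, ← IsIso.hom_inv_id h, hinv, comp_zero]
  have hzu1 : IsZero (u⟦(1 : ℤ)⟧) := by
    rw [IsZero.iff_id_eq_zero, ← IsIso.inv_hom_id h, hinv, zero_comp]
  exact ⟨hUiso (HRS_unshift_isZero u hzu1).isoZero hu, hViso hzv.isoZero hv⟩

private lemma HRS_zero_mem_TF (hUiso : IsoClosed U) (hViso : IsoClosed V)
    (hHom : ∀ X ∈ U, ∀ Y ∈ V, ∀ f : X ⟶ Y, f = 0)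
    (hU1 : ∀ X ∈ U, X⟦(1 : ℤ)⟧ ∈ U) (hdecomp : ∀ A : C, A ∈ star U V)
    (hTiso : IsoClosed T) (hFiso : IsoClosed F)
    (hT : T ⊆ heartSet U V) (hF : F ⊆ heartSet U V)
    (hdec : heartSet U V ⊆ star T F) : (0 : C) ∈ T ∧ (0 : C) ∈ F := by
  obtain ⟨h0U, h0V⟩ := HRS_zero_mem hUiso hViso hHom hU1 hdecomp
  have h0H : (0 : C) ∈ heartSet U V :=
    ⟨hUiso ((shiftFunctor C (1 : ℤ)).map_isZero (isZero_zero C)).isoZero.symm h0U, h0V⟩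
  obtain ⟨t, ht, f', hf', r, s, o, hTr⟩ := hdec h0H
  have h3 : IsIso (Triangle.mk r s o).mor₃ :=
    (Triangle.isZero₂_iff_isIso₃ _ hTr).1 (isZero_zero C)
  have ho : IsIso o := h3
  obtain ⟨ht1, -⟩ := hT ht
  obtain ⟨-, hf2⟩ := hF hf'
  have hinv : inv o = 0 := hHom _ ht1 _ hf2 (inv o)
  have hzf : IsZero f' := by
    rw [IsZero.iff_id_eq_zero, ← IsIso.hom_inv_id o, hinv, comp_zero]
  have hzt : IsZero t := HRS_unshift_isZero t
    (by rw [IsZero.iff_id_eq_zero, ← IsIso.inv_hom_id o, hinv, zero_comp])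
  exact ⟨hTiso hzt.isoZero ht, hFiso hzf.isoZero hf'⟩

private lemma HRS_Vm_sub_V (hViso : IsoClosed V) (hV1 : ∀ Y ∈ V, Y⟦(-1 : ℤ)⟧ ∈ V) :
    ∀ X ∈ {X : C | X⟦(1 : ℤ)⟧ ∈ V}, X ∈ V := fun X hX =>
  hViso (HRS_shiftdown X) (hV1 _ hX)

private lemma HRS_V_split (hUiso : IsoClosed U) (hViso : IsoClosed V)
    (hHom : ∀ X ∈ U, ∀ Y ∈ V, ∀ f : X ⟶ Y, f = 0)
    (hV1 : ∀ Y ∈ V, Y⟦(-1 : ℤ)⟧ ∈ V) (hdecomp : ∀ A : C, A ∈ star U V)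
    (v : C) (hv : v ∈ V) :
    ∃ (h₀ w : C) (e₁ : h₀ ⟶ v) (f₁ : v ⟶ w) (g₁ : w ⟶ h₀⟦(1 : ℤ)⟧),
      h₀ ∈ heartSet U V ∧ w ∈ {X : C | X⟦(1 : ℤ)⟧ ∈ V} ∧
        Triangle.mk e₁ f₁ g₁ ∈ distTriang C := by
  obtain ⟨u₁, hu₁, v₁, hv₁, b, c, d, hR⟩ := hdecomp (v⟦(1 : ℤ)⟧)
  have hR3 := inv_rot_of_distTriang _ (inv_rot_of_distTriang _ (inv_rot_of_distTriang _ hR))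
  set R3 := (Triangle.mk b c d).invRotate.invRotate.invRotate with hR3def
  have e : (v⟦(1 : ℤ)⟧)⟦(-1 : ℤ)⟧ ≅ v := HRS_shiftdown v
  have hnew : Triangle.mk (R3.mor₁ ≫ e.hom) (e.inv ≫ R3.mor₂) R3.mor₃ ∈ distTriang C := by
    refine isomorphic_distinguished _ hR3 _ ?_
    exact Triangle.isoMk _ _ (Iso.refl _) e.symm (Iso.refl _) (by erw [Category.assoc, Iso.hom_inv_id, Category.comp_id, Category.id_comp]) (by simp [Triangle.mk]; rfl) (by simp [Triangle.mk])
  refine ⟨u₁⟦(-1 : ℤ)⟧, v₁⟦(-1 : ℤ)⟧, R3.mor₁ ≫ e.hom, e.inv ≫ R3.mor₂, R3.mor₃,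
    ⟨hUiso (HRS_shiftup u₁).symm hu₁, ?_⟩, hViso (HRS_shiftup v₁).symm hv₁, hnew⟩
  have := HRS_V_ext hHom hViso hV1 hdecomp _ (inv_rot_of_distTriang _ hnew)
    (hV1 _ (hV1 _ hv₁)) hv
  exact this

private lemma HRS_U'_shift (hUiso : IsoClosed U)
    (hHom : ∀ X ∈ U, ∀ Y ∈ V, ∀ f : X ⟶ Y, f = 0)
    (hU1 : ∀ X ∈ U, X⟦(1 : ℤ)⟧ ∈ U) (hdecomp : ∀ A : C, A ∈ star U V)
    (hT : T ⊆ heartSet U V) : ∀ A ∈ star U T, A⟦(1 : ℤ)⟧ ∈ U := by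
  rintro A ⟨u, hu, t, ht, f, g, h, hTr⟩
  obtain ⟨ht1, -⟩ := hT ht
  exact HRS_U_ext hHom hUiso hU1 hdecomp _ (HRS_rot3 f g h hTr) (hU1 u hu) ht1

end Aux2

section Aux3

variable {U V T F : Set C}

private lemma HRS_homU'V' (hViso : IsoClosed V)
    (hHom : ∀ X ∈ U, ∀ Y ∈ V, ∀ f : X ⟶ Y, f = 0)
    (hV1 : ∀ Y ∈ V, Y⟦(-1 : ℤ)⟧ ∈ V)
    (hT : T ⊆ heartSet U V) (hF : F ⊆ heartSet U V)
    (hTF : ∀ X ∈ T, ∀ Y ∈ F, ∀ f : X ⟶ Y, f = 0) :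
    ∀ A ∈ star U T, ∀ B ∈ star F {X : C | X⟦(1 : ℤ)⟧ ∈ V}, ∀ φ : A ⟶ B, φ = 0 := by
  rintro A ⟨u, hu, t, ht, f, g, h, hTA⟩ B ⟨f₀, hf₀, w, hw, j, π, δ, hTB⟩ φ
  obtain ⟨-, hf₀V⟩ := hF hf₀
  obtain ⟨ht1, -⟩ := hT ht
  have hwV : w ∈ V := HRS_Vm_sub_V hViso hV1 w hw
  have hUB : ∀ ψ : u ⟶ B, ψ = 0 := fun ψ => by
    obtain ⟨σ, hσ⟩ := Triangle.coyoneda_exact₂ _ hTB ψ (hHom u hu _ hwV _)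
    rw [hσ, hHom u hu _ hf₀V σ]; exact zero_comp
  have hTB' : ∀ ψ : t ⟶ B, ψ = 0 := fun ψ => by
    obtain ⟨σ, hσ⟩ := Triangle.coyoneda_exact₂ _ hTB ψ (HRS_hom_shift hHom ht1 hw (ψ ≫ π))
    rw [hσ, hTF t ht _ hf₀ σ]; exact zero_comp
  obtain ⟨ρ, hρ⟩ := Triangle.yoneda_exact₂ _ hTA φ (hUB _)
  rw [hρ, hTB' ρ]; exact comp_zero

private lemma HRS_orth_V' (hUiso : IsoClosed U) (hViso : IsoClosed V)
    (hHom : ∀ X ∈ U, ∀ Y ∈ V, ∀ f : X ⟶ Y, f = 0)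
    (hV1 : ∀ Y ∈ V, Y⟦(-1 : ℤ)⟧ ∈ V) (hdecomp : ∀ A : C, A ∈ star U V)
    (hFiso : IsoClosed F)
    (hT : T ⊆ heartSet U V) (hF : F ⊆ heartSet U V)
    (hdec : heartSet U V ⊆ star T F)
    (X : C) (h1 : ∀ u₀ ∈ U, ∀ f : u₀ ⟶ X, f = 0)
    (h2 : ∀ t₀ ∈ T, ∀ f : t₀ ⟶ X, f = 0) :
    X ∈ star F {X : C | X⟦(1 : ℤ)⟧ ∈ V} := by
  have hXV : X ∈ V := HRS_mem_V_of hViso hHom hV1 hdecomp X h1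
  obtain ⟨h₀, w, e₁, f₁, g₁, hh₀, hw, hT2⟩ := HRS_V_split hUiso hViso hHom hV1 hdecomp X hXV
  obtain ⟨t, ht, f', hf', r, s, o, hT3⟩ := hdec hh₀
  obtain ⟨ht1, -⟩ := hT ht
  obtain ⟨-, hf'V⟩ := hF hf'
  have hre : r ≫ e₁ = 0 := h2 t ht (r ≫ e₁)
  obtain ⟨σ, hσ⟩ := Triangle.coyoneda_exact₂ _ (inv_rot_of_distTriang _ hT2) r hre
  have hσ0 : σ = 0 := HRS_hom_shift hHom ht1
    (hViso (HRS_shiftup w).symm (HRS_Vm_sub_V hViso hV1 w hw)) σ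
  have hr0 : r = 0 := by rw [hσ, hσ0, zero_comp]; rfl
  obtain ⟨σ', hσ'⟩ := Triangle.coyoneda_exact₂ _ (inv_rot_of_distTriang _ hT3) (𝟙 t)
    (by dsimp [Triangle.invRotate, Triangle.mk]; rw [hr0, comp_zero]; rfl)
  have hσ'0 : σ' = 0 := HRS_hom_shift hHom ht1 (hViso (HRS_shiftup f').symm hf'V) σ'
  have hzt : IsZero t := by rw [IsZero.iff_id_eq_zero, hσ', hσ'0, zero_comp]; rfl
  have h2' : IsIso (Triangle.mk r s o).mor₂ := (Triangle.isZero₁_iff_isIso₂ _ hT3).1 hzt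
  have hs : IsIso s := h2'
  exact ⟨h₀, hFiso (asIso s).symm hf', w, hw, e₁, f₁, g₁, hT2⟩

private lemma HRS_heartF_T (hHom : ∀ X ∈ U, ∀ Y ∈ V, ∀ f : X ⟶ Y, f = 0)
    (hTiso : IsoClosed T)
    (hT : T ⊆ heartSet U V) (hF : F ⊆ heartSet U V)
    (hdec : heartSet U V ⊆ star T F)
    (s₀ : C) (hs₀ : s₀ ∈ heartSet U V)
    (htors : ∀ f₁ ∈ F, ∀ ρ : s₀ ⟶ f₁, ρ = 0) : s₀ ∈ T := by
  obtain ⟨t, ht, f', hf', r, s, o, hT3⟩ := hdec hs₀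
  obtain ⟨ht1, -⟩ := hT ht
  obtain ⟨-, hf'V⟩ := hF hf'
  have hs0 : s = 0 := htors f' hf' s
  obtain ⟨ρ', hρ'⟩ := Triangle.yoneda_exact₂ _ (rot_of_distTriang _ hT3) (𝟙 f')
    (by dsimp [Triangle.rotate, Triangle.mk]; rw [hs0, zero_comp]; rfl)
  have hρ'0 : ρ' = 0 := hHom _ ht1 _ hf'V ρ'
  have hzf : IsZero f' := by rw [IsZero.iff_id_eq_zero, hρ', hρ'0, comp_zero]; rfl
  have h1' : IsIso (Triangle.mk r s o).mor₁ := (Triangle.isZero₃_iff_isIso₁ _ hT3).1 hzf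
  have hr : IsIso r := h1'
  exact hTiso (asIso r) ht

end Aux3

open Preadditive

section Aux4

variable {U V T F : Set C}

private lemma HRS_co2 {X Y Z W : C} {f : X ⟶ Y} {g : Y ⟶ Z} {h : Z ⟶ X⟦(1 : ℤ)⟧}
    (hT : Triangle.mk f g h ∈ distTriang C) (φ : W ⟶ Y) (hφ : φ ≫ g = 0) :
    ∃ σ : W ⟶ X, φ = σ ≫ f :=
  Triangle.coyoneda_exact₂ _ hT φ hφ

private lemma HRS_co3 {X Y Z W : C} {f : X ⟶ Y} {g : Y ⟶ Z} {h : Z ⟶ X⟦(1 : ℤ)⟧}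
    (hT : Triangle.mk f g h ∈ distTriang C) (φ : W ⟶ Z) (hφ : φ ≫ h = 0) :
    ∃ σ : W ⟶ Y, φ = σ ≫ g :=
  Triangle.coyoneda_exact₃ _ hT φ hφ

private lemma HRS_yo2 {X Y Z W : C} {f : X ⟶ Y} {g : Y ⟶ Z} {h : Z ⟶ X⟦(1 : ℤ)⟧}
    (hT : Triangle.mk f g h ∈ distTriang C) (φ : Y ⟶ W) (hφ : f ≫ φ = 0) :
    ∃ σ : Z ⟶ W, φ = g ≫ σ :=
  Triangle.yoneda_exact₂ _ hT φ hφ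

private lemma HRS_complete₂ {X Y Z X' Y' Z' : C} {f : X ⟶ Y} {g : Y ⟶ Z} {h : Z ⟶ X⟦(1 : ℤ)⟧}
    {f' : X' ⟶ Y'} {g' : Y' ⟶ Z'} {h' : Z' ⟶ X'⟦(1 : ℤ)⟧}
    (hT : Triangle.mk f g h ∈ distTriang C) (hT' : Triangle.mk f' g' h' ∈ distTriang C)
    (a : X ⟶ X') (c : Z ⟶ Z') (comm : h ≫ a⟦(1 : ℤ)⟧' = c ≫ h') :
    ∃ b : Y ⟶ Y', f ≫ b = a ≫ f' ∧ g ≫ c = b ≫ g' :=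
  complete_distinguished_triangle_morphism₂ _ _ hT hT' a c comm

private lemma HRS_decomp (hUiso : IsoClosed U) (hViso : IsoClosed V)
    (hHom : ∀ X ∈ U, ∀ Y ∈ V, ∀ f : X ⟶ Y, f = 0)
    (hV1 : ∀ Y ∈ V, Y⟦(-1 : ℤ)⟧ ∈ V) (hdecomp : ∀ A : C, A ∈ star U V)
    (hFiso : IsoClosed F)
    (hT : T ⊆ heartSet U V) (hF : F ⊆ heartSet U V)
    (hTF : ∀ X ∈ T, ∀ Y ∈ F, ∀ f : X ⟶ Y, f = 0)
    (hdec : heartSet U V ⊆ star T F) (A : C) :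
    A ∈ star (star U T) (star F {X : C | X⟦(1 : ℤ)⟧ ∈ V}) := by
  obtain ⟨u, hu, v, hv, a₁, p₁, d₁, hT1⟩ := hdecomp A
  obtain ⟨h₀, w, e₁, f₁, g₁, hh₀, hw, hT2⟩ := HRS_V_split hUiso hViso hHom hV1 hdecomp v hv
  obtain ⟨t, ht, f', hf', r₁, s₁, o₁, hT3⟩ := hdec hh₀
  obtain ⟨-, hf'V⟩ := hF hf'
  obtain ⟨x', m, k₀, hT1'⟩ := distinguished_cocone_triangle₂ ((r₁ ≫ e₁) ≫ d₁)
  obtain ⟨β, hβ₁, hβ₂⟩ := HRS_complete₂ hT1' hT1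
    (𝟙 u) (r₁ ≫ e₁) (by rw [CategoryTheory.Functor.map_id, Category.comp_id])
  obtain ⟨y, γ, ρ, hT7⟩ := distinguished_cocone_triangle β
  have ha : a₁ = m ≫ β := by rw [hβ₁, Category.id_comp]
  have hzw_of : ∀ z₀ : C, z₀ ∈ U ∨ z₀ ∈ T → ∀ σ : z₀ ⟶ w, σ = 0 := by
    rintro z₀ (hz | hz) σ
    · exact hHom _ hz _ (HRS_Vm_sub_V hViso hV1 w hw) σ
    · obtain ⟨hz1, -⟩ := hT hz
      exact HRS_hom_shift hHom hz1 hw σ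
  have hzf'_of : ∀ z₀ : C, z₀ ∈ U ∨ z₀ ∈ T → ∀ σ : z₀ ⟶ f', σ = 0 := by
    rintro z₀ (hz | hz) σ
    · exact hHom _ hz _ hf'V σ
    · exact hTF _ hz _ hf' σ
  have hT2rr : Triangle.mk g₁ (-e₁⟦(1 : ℤ)⟧') (-f₁⟦(1 : ℤ)⟧') ∈ distTriang C :=
    rot_of_distTriang _ (rot_of_distTriang _ hT2)
  have hT3rr : Triangle.mk o₁ (-r₁⟦(1 : ℤ)⟧') (-s₁⟦(1 : ℤ)⟧') ∈ distTriang C :=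
    rot_of_distTriang _ (rot_of_distTriang _ hT3)
  have hT1r : Triangle.mk p₁ d₁ (-a₁⟦(1 : ℤ)⟧') ∈ distTriang C := rot_of_distTriang _ hT1
  have hT1'rr : Triangle.mk ((r₁ ≫ e₁) ≫ d₁) (-m⟦(1 : ℤ)⟧') (-k₀⟦(1 : ℤ)⟧') ∈ distTriang C :=
    rot_of_distTriang _ (rot_of_distTriang _ hT1')
  have key : ∀ z₀ : C, z₀ ∈ U ∨ z₀ ∈ T → ∀ ξ : z₀ ⟶ t⟦(1 : ℤ)⟧,
      (ξ ≫ r₁⟦(1 : ℤ)⟧') ≫ e₁⟦(1 : ℤ)⟧' = 0 → ξ = 0 := by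
    intro z₀ hz ξ hξ
    obtain ⟨σ₁, h1⟩ := HRS_co2 hT2rr (ξ ≫ r₁⟦(1 : ℤ)⟧')
      (by rw [comp_neg, hξ, neg_zero])
    have h10 : ξ ≫ r₁⟦(1 : ℤ)⟧' = 0 := by rw [h1, hzw_of z₀ hz σ₁, zero_comp]
    obtain ⟨σ₂, h2⟩ := HRS_co2 hT3rr ξ (by rw [comp_neg, h10, neg_zero])
    rw [h2, hzf'_of z₀ hz σ₂, zero_comp]
  have factor_v : ∀ z₀ : C, z₀ ∈ T → ∀ σ : z₀ ⟶ v, ∃ σ₇ : z₀ ⟶ t, σ = σ₇ ≫ (r₁ ≫ e₁) := by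
    intro z₀ hz σ
    obtain ⟨σ₆, h6⟩ := HRS_co2 hT2 σ (hzw_of z₀ (Or.inr hz) (σ ≫ f₁))
    obtain ⟨σ₇, h7⟩ := HRS_co2 hT3 σ₆ (hzf'_of z₀ (Or.inr hz) (σ₆ ≫ s₁))
    exact ⟨σ₇, by rw [h6, h7, Category.assoc]⟩
  have hρβ : ρ ≫ β⟦(1 : ℤ)⟧' = 0 := comp_distTriang_mor_zero₃₁ _ hT7
  have hθm : ((r₁ ≫ e₁) ≫ d₁) ≫ m⟦(1 : ℤ)⟧' = 0 := comp_distTriang_mor_zero₃₁ _ hT1'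
  have hβγ : β ≫ γ = 0 := comp_distTriang_mor_zero₁₂ _ hT7
  have hpd : p₁ ≫ d₁ = 0 := comp_distTriang_mor_zero₂₃ _ hT1
  have main : ∀ z₀ : C, z₀ ∈ U ∨ z₀ ∈ T → ∀ φ : z₀ ⟶ y, φ = 0 := by
    intro z₀ hz φ
    have e1 : k₀⟦(1 : ℤ)⟧' ≫ r₁⟦(1 : ℤ)⟧' ≫ e₁⟦(1 : ℤ)⟧' = β⟦(1 : ℤ)⟧' ≫ p₁⟦(1 : ℤ)⟧' := by
      simp only [← Functor.map_comp]; rw [hβ₂]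
    have hstep2 : (φ ≫ ρ) ≫ k₀⟦(1 : ℤ)⟧' = 0 := by
      refine key z₀ hz _ ?_
      calc (((φ ≫ ρ) ≫ k₀⟦(1 : ℤ)⟧') ≫ r₁⟦(1 : ℤ)⟧') ≫ e₁⟦(1 : ℤ)⟧'
          = (φ ≫ ρ) ≫ (k₀⟦(1 : ℤ)⟧' ≫ r₁⟦(1 : ℤ)⟧' ≫ e₁⟦(1 : ℤ)⟧') := by
            simp only [Category.assoc]
        _ = φ ≫ (ρ ≫ β⟦(1 : ℤ)⟧') ≫ p₁⟦(1 : ℤ)⟧' := by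
            rw [e1]; simp only [Category.assoc]
        _ = 0 := by rw [hρβ, zero_comp, comp_zero]
    obtain ⟨σ₃, hσ₃⟩ := HRS_co3 hT1'rr (φ ≫ ρ) (by rw [comp_neg, hstep2, neg_zero])
    have hσ₃' : φ ≫ ρ = -(σ₃ ≫ m⟦(1 : ℤ)⟧') := by rw [hσ₃, comp_neg]
    have hm : σ₃ ≫ m⟦(1 : ℤ)⟧' = -(φ ≫ ρ) := by rw [hσ₃', neg_neg]
    have hσ₃a : σ₃ ≫ a₁⟦(1 : ℤ)⟧' = 0 := by
      rw [ha, Functor.map_comp, ← Category.assoc, hm, neg_comp, Category.assoc, hρβ,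
        comp_zero, neg_zero]
    obtain ⟨σ₄, hσ₄⟩ := HRS_co3 hT1r σ₃ (by rw [comp_neg, hσ₃a, neg_zero])
    have hφρ : φ ≫ ρ = 0 := by
      rcases hz with hzU | hzT
      · rw [hσ₃', hσ₄, hHom _ hzU _ hv σ₄]; simp
      · obtain ⟨σ₇, h7⟩ := factor_v z₀ hzT σ₄
        simp only [Category.assoc] at hθm
        rw [hσ₃', hσ₄, h7]
        simp only [Category.assoc, hθm, comp_zero, neg_zero]
    obtain ⟨ψ₀, hψ₀⟩ := HRS_co3 hT7 φ hφρ
    rcases hz with hzU | hzT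
    · obtain ⟨σ₅, h5⟩ := HRS_co2 hT1 ψ₀ (hHom _ hzU _ hv (ψ₀ ≫ p₁))
      rw [hψ₀, h5, Category.assoc, ha]
      simp only [Category.assoc, hβγ, comp_zero]
    · obtain ⟨σ₉, h9⟩ := factor_v z₀ hzT (ψ₀ ≫ p₁)
      have h9θ : σ₉ ≫ ((r₁ ≫ e₁) ≫ d₁) = 0 := by
        rw [← Category.assoc, ← h9, Category.assoc, hpd, comp_zero]
      obtain ⟨lam, hlam⟩ := HRS_co3 hT1' σ₉ h9θ
      have hsub : (ψ₀ - lam ≫ β) ≫ p₁ = 0 := by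
        rw [sub_comp, h9, hlam, Category.assoc, Category.assoc, hβ₂, sub_self]
      obtain ⟨σ₁₀, h10⟩ := HRS_co2 hT1 (ψ₀ - lam ≫ β) hsub
      have hψ : ψ₀ = lam ≫ β + σ₁₀ ≫ a₁ := by rw [← h10]; abel
      rw [hψ₀, hψ, add_comp, ha]
      simp only [Category.assoc, hβγ, comp_zero, add_zero, zero_comp, zero_add]
  exact ⟨x', ⟨u, hu, t, ht, m, k₀, _, hT1'⟩, y,
    HRS_orth_V' hUiso hViso hHom hV1 hdecomp hFiso hT hF hdec y
      (fun u₀ hu₀ φ => main u₀ (Or.inl hu₀) φ)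
      (fun t₀ ht₀ φ => main t₀ (Or.inr ht₀) φ), β, γ, ρ, hT7⟩

end Aux4


/-- Happel–Reiten–Smalø tilt: if (𝒰, 𝒱) is a t-structure with heart ℋ and
(𝒯, ℱ) is a torsion pair in ℋ, then (𝒰 ∗ 𝒯, ℱ ∗ 𝒱[-1]) is again a t-structure, with
heart ℱ ∗ 𝒯[-1].  Here 𝒱[-1] = {X : X[1] ∈ 𝒱} and 𝒯[-1] = {X : X[1] ∈ 𝒯}. -/
theorem HRS_tilt_is_tstructure (U V T F : Set C) (hUV : IsTStr U V)
    (hTiso : IsoClosed T) (hFiso : IsoClosed F)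
    (hT : T ⊆ heartSet U V) (hF : F ⊆ heartSet U V)
    (hTF : ∀ X ∈ T, ∀ Y ∈ F, ∀ f : X ⟶ Y, f = 0)
    (hdec : heartSet U V ⊆ star T F) :
    IsTStr (star U T) (star F {X : C | X⟦(1 : ℤ)⟧ ∈ V}) ∧
    heartSet (star U T) (star F {X : C | X⟦(1 : ℤ)⟧ ∈ V}) =
      star F {X : C | X⟦(1 : ℤ)⟧ ∈ T} := by
  obtain ⟨hUiso, hViso, hHom, hU1, hV1, hdecomp⟩ := hUV
  obtain ⟨h0T, h0F⟩ := HRS_zero_mem_TF hUiso hViso hHom hU1 hdecomp hTiso hFiso hT hF hdec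
  have h0V : (0 : C) ∈ V := (HRS_zero_mem hUiso hViso hHom hU1 hdecomp).2
  have h0Vm : (0 : C) ∈ {X : C | X⟦(1 : ℤ)⟧ ∈ V} :=
    hViso ((shiftFunctor C (1 : ℤ)).map_isZero (isZero_zero C)).isoZero.symm h0V
  have hFsub : ∀ f₁ ∈ F, f₁ ∈ star F {X : C | X⟦(1 : ℤ)⟧ ∈ V} := fun f₁ hf₁ =>
    ⟨f₁, hf₁, 0, h0Vm, 𝟙 f₁, 0, 0, contractible_distinguished f₁⟩
  have hhomU'V' := HRS_homU'V' (T := T) (F := F) hViso hHom hV1 hT hF hTF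
  refine ⟨⟨HRS_star_isoClosed U T, HRS_star_isoClosed F _, hhomU'V', ?_, ?_,
    HRS_decomp hUiso hViso hHom hV1 hdecomp hFiso hT hF hTF hdec⟩, ?_⟩
  · intro X hX
    exact ⟨X⟦(1 : ℤ)⟧, HRS_U'_shift hUiso hHom hU1 hdecomp hT X hX, 0, h0T, 𝟙 _, 0, 0,
      contractible_distinguished _⟩
  · intro Y hY
    have hYV : Y ∈ V := by
      obtain ⟨f₀, hf₀, w, hw, i, π, δ, hTr⟩ := hY
      obtain ⟨-, hf₀V⟩ := hF hf₀
      exact HRS_V_ext hHom hViso hV1 hdecomp _ hTr hf₀V (HRS_Vm_sub_V hViso hV1 w hw)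
    have hY' : Y⟦(-1 : ℤ)⟧ ∈ {X : C | X⟦(1 : ℤ)⟧ ∈ V} := hViso (HRS_shiftup Y).symm hYV
    exact ⟨0, h0F, Y⟦(-1 : ℤ)⟧, hY', 0, 𝟙 _, 0, contractible_distinguished₁ _⟩
  · ext X
    constructor
    · rintro ⟨hX1, hX2⟩
      obtain ⟨f₀, hf₀, s, hs, i, π, δ', hTr⟩ := hX2
      obtain ⟨hf₀1, hf₀V⟩ := hF hf₀
      have hT8 : Triangle.mk (-i⟦(1 : ℤ)⟧') (-π⟦(1 : ℤ)⟧') (-δ'⟦(1 : ℤ)⟧') ∈ distTriang C :=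
        HRS_rot3 i π δ' hTr
      have hs11 : (s⟦(1 : ℤ)⟧)⟦(1 : ℤ)⟧ ∈ U := by
        have hT9 := HRS_rot3 (-i⟦(1 : ℤ)⟧') (-π⟦(1 : ℤ)⟧') (-δ'⟦(1 : ℤ)⟧') hT8
        exact HRS_U_ext hHom hUiso hU1 hdecomp _ (rot_of_distTriang _ hT9)
          (HRS_U'_shift hUiso hHom hU1 hdecomp hT _ hX1) (hU1 _ (hU1 _ hf₀1))
      have htors : ∀ f₁ ∈ F, ∀ ν : s⟦(1 : ℤ)⟧ ⟶ f₁, ν = 0 := by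
        intro f₁ hf₁ ν
        obtain ⟨-, hf₁V⟩ := hF hf₁
        have hπν : π⟦(1 : ℤ)⟧' ≫ ν = 0 :=
          hhomU'V' _ hX1 f₁ (hFsub f₁ hf₁) (π⟦(1 : ℤ)⟧' ≫ ν)
        have hT8r : Triangle.mk (-π⟦(1 : ℤ)⟧') (-δ'⟦(1 : ℤ)⟧')
            (-((-i⟦(1 : ℤ)⟧')⟦(1 : ℤ)⟧')) ∈ distTriang C := rot_of_distTriang _ hT8
        obtain ⟨ν', hν'⟩ := HRS_yo2 hT8r ν (by rw [neg_comp, hπν, neg_zero])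
        rw [hν', hHom _ (hU1 _ hf₀1) _ hf₁V ν', comp_zero]
      have hsT : s⟦(1 : ℤ)⟧ ∈ T :=
        HRS_heartF_T hHom hTiso hT hF hdec _ ⟨hs11, hs⟩ htors
      exact ⟨f₀, hf₀, s, hsT, i, π, δ', hTr⟩
    · rintro ⟨f₀, hf₀, s, hsT, i, π, δ', hTr⟩
      obtain ⟨hf₀1, hf₀V⟩ := hF hf₀
      obtain ⟨-, hsV⟩ := hT hsT
      exact ⟨⟨f₀⟦(1 : ℤ)⟧, hf₀1, s⟦(1 : ℤ)⟧, hsT, -i⟦(1 : ℤ)⟧', -π⟦(1 : ℤ)⟧', -δ'⟦(1 : ℤ)⟧',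
        HRS_rot3 i π δ' hTr⟩, ⟨f₀, hf₀, s, hsV, i, π, δ', hTr⟩⟩
end
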